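/- arXiv:1403.3920 — 4 statements merged into one kernel-verified Lean document; each statement's English description precedes it below -/
import Mathlib

section
/- The separable Bregman score S(x,Q) = −ψ'(q(x)) − ∫ [ψ(q(y)) − q(y)ψ'(q(y))] dμ(y) is a proper scoring rule: for all probability densities p, q (with respect to μ), the expected score S(P,Q) := ∫ p(x) S(x,Q) dμ(x) satisfies S(P,Q) ≥ S(P,P). -/
open MeasureTheory Set

lemma bregman_tangent {ψ : ℝ → ℝ} (hconv : ConvexOn ℝ (Set.Ici (0:ℝ)) ψ)
    (hdiff : Differentiable ℝ ψ) {a b : ℝ} (ha : 0 ≤ a) (hb : 0 ≤ b) :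
    ψ b + deriv ψ b * (a - b) ≤ ψ a := by
  rcases lt_trichotomy a b with h | h | h
  · have := hconv.slope_le_deriv (mem_Ici.2 ha) (mem_Ici.2 hb) h (hdiff b)
    rw [slope_def_field, div_le_iff₀ (by linarith)] at this
    nlinarith
  · simp [h]
  · have := hconv.deriv_le_slope (mem_Ici.2 hb) (mem_Ici.2 ha) h (hdiff b)
    rw [slope_def_field, le_div_iff₀ (by linarith)] at this
    nlinarith

/-- The separable Bregman score is proper: S(P,Q) ≥ S(P,P) for all densities p, q. -/
theorem bregman_score_proper
    {X : Type*} [MeasurableSpace X] (μ : Measure X) [SigmaFinite μ]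
    (ψ : ℝ → ℝ)
    (hconv : ConvexOn ℝ (Set.Ici (0:ℝ)) ψ)
    (hdiff : Differentiable ℝ ψ)
    (p q : X → ℝ)
    (hp : ∀ x, 0 ≤ p x) (hq : ∀ x, 0 ≤ q x)
    (hpint : ∫ x, p x ∂μ = 1) (hqint : ∫ x, q x ∂μ = 1)
    (h1 : Integrable (fun x => p x * (-(deriv ψ (q x)))) μ)
    (h2 : Integrable (fun y => ψ (q y) - q y * deriv ψ (q y)) μ)
    (h3 : Integrable (fun x => p x * (-(deriv ψ (p x)))) μ)
    (h4 : Integrable (fun y => ψ (p y) - p y * deriv ψ (p y)) μ) :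
    (∫ x, p x * (-(deriv ψ (p x))) ∂μ) - (∫ y, (ψ (p y) - p y * deriv ψ (p y)) ∂μ)
      ≤ (∫ x, p x * (-(deriv ψ (q x))) ∂μ) - (∫ y, (ψ (q y) - q y * deriv ψ (q y)) ∂μ) := by
  rw [← integral_sub h3 h4, ← integral_sub h1 h2]
  apply integral_mono (h3.sub h4) (h1.sub h2)
  intro x
  have := bregman_tangent hconv hdiff (hp x) (hq x)
  simp only [Pi.sub_apply]
  nlinarith
end

section
/- The Tsallis score S(x,Q) = (γ−1)∫ q(y)^γ dμ(y) − γ q(x)^{γ−1}, with γ > 1, is a proper scoring rule: S(P,Q) − S(P,P) = ∫ p^γ dμ + (γ−1)∫ q^γ dμ − γ∫ p q^{γ−1} dμ ≥ 0, for probability densities p and q with respect to μ. -/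
open MeasureTheory Real

/-- The Tsallis score with γ > 1 is proper:
S(P,Q) − S(P,P) equals the Tsallis divergence, which is nonnegative. -/
theorem tsallis_score_proper
    {X : Type*} [MeasurableSpace X] (μ : Measure X) [SigmaFinite μ]
    (γ : ℝ) (hγ : 1 < γ)
    (p q : X → ℝ)
    (hp : ∀ x, 0 ≤ p x) (hq : ∀ x, 0 ≤ q x)
    (hpm : Measurable p) (hqm : Measurable q)
    (hp1 : ∫ x, p x ∂μ = 1) (hq1 : ∫ x, q x ∂μ = 1)
    (hpγ : Integrable (fun x => p x ^ γ) μ)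
    (hqγ : Integrable (fun x => q x ^ γ) μ)
    (hpq : Integrable (fun x => p x * q x ^ (γ - 1)) μ)
    (hppow : Integrable (fun x => p x * p x ^ (γ - 1)) μ) :
    (∫ x, p x * ((γ - 1) * (∫ y, q y ^ γ ∂μ) - γ * q x ^ (γ - 1)) ∂μ)
      - (∫ x, p x * ((γ - 1) * (∫ y, p y ^ γ ∂μ) - γ * p x ^ (γ - 1)) ∂μ)
      = (∫ y, p y ^ γ ∂μ) + (γ - 1) * (∫ y, q y ^ γ ∂μ) - γ * (∫ y, p y * q y ^ (γ - 1) ∂μ) ∧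
    0 ≤ (∫ y, p y ^ γ ∂μ) + (γ - 1) * (∫ y, q y ^ γ ∂μ) - γ * (∫ y, p y * q y ^ (γ - 1) ∂μ) := by
  have hγ0 : (0:ℝ) < γ := lt_trans one_pos hγ
  have hpInt : Integrable p μ := by
    by_contra h
    rw [integral_undef h] at hp1
    norm_num at hp1
  -- pointwise: p x * p x ^ (γ - 1) = p x ^ γ
  have hpp : ∀ x, p x * p x ^ (γ - 1) = p x ^ γ := by
    intro x
    rcases eq_or_lt_of_le (hp x) with h0 | h0
    · rw [← h0]
      rw [Real.zero_rpow (by linarith), Real.zero_rpow (ne_of_gt hγ0), mul_zero]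
    · nth_rewrite 1 [← Real.rpow_one (p x)]
      rw [← Real.rpow_add h0]
      norm_num
  have hppow' : Integrable (fun x => p x ^ γ) μ := by
    simpa [hpp] using hppow
  set A := ∫ y, p y ^ γ ∂μ with hA
  set C := ∫ y, q y ^ γ ∂μ with hC
  set D := ∫ y, p y * q y ^ (γ - 1) ∂μ with hD
  have key : ∀ (f : X → ℝ) (B : ℝ), Integrable (fun x => p x * f x) μ →
      (∫ x, p x * ((γ - 1) * B - γ * f x) ∂μ)
        = (γ - 1) * B - γ * ∫ x, p x * f x ∂μ := by
    intro f B hf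
    have : (fun x => p x * ((γ - 1) * B - γ * f x))
        = fun x => ((γ - 1) * B) * p x - γ * (p x * f x) := by
      funext x; ring
    rw [this, integral_sub (hpInt.const_mul _) (hf.const_mul _),
      integral_const_mul, integral_const_mul, hp1, mul_one]
  constructor
  · rw [key (fun x => q x ^ (γ - 1)) C hpq, key (fun x => p x ^ (γ - 1)) A hppow]
    have : ∫ x, p x * p x ^ (γ - 1) ∂μ = A := by
      rw [hA]; congr 1; funext x; exact hpp x
    rw [this]; ring
  · -- Young's inequality pointwise, then integrate
    have hconj : γ.HolderConjugate (γ / (γ - 1)) := by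
      rw [Real.holderConjugate_iff]
      constructor
      · exact hγ
      · field_simp; ring
    have hpt : ∀ x, γ * (p x * q x ^ (γ - 1)) ≤ p x ^ γ + (γ - 1) * q x ^ γ := by
      intro x
      have hy := Real.young_inequality_of_nonneg (hp x)
        (Real.rpow_nonneg (hq x) (γ - 1)) hconj
      have hb : (q x ^ (γ - 1)) ^ (γ / (γ - 1)) = q x ^ γ := by
        rw [← Real.rpow_mul (hq x)]
        congr 1
        rw [mul_comm, div_mul_cancel₀ γ (by linarith : γ - 1 ≠ 0)]
      rw [hb] at hy
      have h2 := mul_le_mul_of_nonneg_left hy hγ0.le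
      have h3 : γ * (p x ^ γ / γ + q x ^ γ / (γ / (γ - 1)))
          = p x ^ γ + (γ - 1) * q x ^ γ := by
        field_simp
      linarith
    have hI1 : Integrable (fun x => γ * (p x * q x ^ (γ - 1))) μ := hpq.const_mul γ
    have hI2 : Integrable (fun x => p x ^ γ + (γ - 1) * q x ^ γ) μ :=
      hpγ.add (hqγ.const_mul _)
    have hmono := integral_mono hI1 hI2 hpt
    rw [integral_const_mul] at hmono
    rw [integral_add hpγ (hqγ.const_mul _), integral_const_mul] at hmono
    linarith
end

section
/- For a real location model p_θ(x) = f(x−θ), if the Bregman gauge α = ψ'' is locally bounded (bounded on every interval (0,M)) and f' is bounded on ℝ, then the estimating function λ(x,θ) = −α(f(x−θ)) f'(x−θ) is bounded in x for each θ (hence the Bregman estimator is B-robust). -/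
open MeasureTheory

/-- Location model: if the Bregman gauge α is locally bounded and f' is bounded,
then the estimating function λ(x,θ) = −α(f(x−θ)) f'(x−θ) is bounded in x for each θ. -/
theorem bregman_location_B_robust
    (f : ℝ → ℝ) (α : ℝ → ℝ) (K : ℝ)
    (hf_pos : ∀ x, 0 < f x)
    (hf_diff : Differentiable ℝ f)
    (hf_int : ∫ x, f x = 1)
    (hf' : ∀ x, |deriv f x| ≤ K)
    (hα_nonneg : ∀ t, 0 < t → 0 ≤ α t)
    (hα_loc : ∀ M > 0, ∃ C, ∀ t ∈ Set.Ioo (0:ℝ) M, α t ≤ C) :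
    ∀ θ : ℝ, ∃ B, ∀ x, |(-(α (f (x - θ)) * deriv f (x - θ)))| ≤ B := by
  have hK0 : 0 ≤ K := le_trans (abs_nonneg _) (hf' 0)
  -- f is Lipschitz with constant K
  have hLip : LipschitzWith K.toNNReal f := by
    apply lipschitzWith_of_nnnorm_deriv_le hf_diff
    intro x
    rw [← NNReal.coe_le_coe]
    simpa [Real.coe_toNNReal K hK0] using hf' x
  -- f is integrable
  have hInt : Integrable f := by
    by_contra h
    rw [integral_undef h] at hf_int
    norm_num at hf_int
  -- f is bounded by 1 + K
  have hfb : ∀ x, f x ≤ 1 + K := by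
    intro x0
    have h1 : ∫ t in Set.Icc x0 (x0 + 1), f x0 - K ≤ ∫ t in Set.Icc x0 (x0 + 1), f t := by
      apply setIntegral_mono_on
      · exact integrable_const _
      · exact hInt.integrableOn
      · exact measurableSet_Icc
      · intro t ht
        have := hLip.dist_le_mul t x0
        rw [Real.dist_eq, Real.dist_eq, Real.coe_toNNReal K hK0] at this
        have habs : |t - x0| ≤ 1 := by
          rw [abs_le]; constructor <;> [linarith [ht.1]; linarith [ht.2]]
        have hmul : K * |t - x0| ≤ K * 1 := mul_le_mul_of_nonneg_left habs hK0
        have := abs_le.mp this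
        nlinarith [this.1, this.2]
    have h2 : ∫ t in Set.Icc x0 (x0 + 1), f t ≤ ∫ t, f t := by
      apply setIntegral_le_integral hInt
      filter_upwards with t using (hf_pos t).le
    rw [setIntegral_const] at h1
    rw [Real.volume_real_Icc_of_le (by linarith : x0 ≤ x0 + 1)] at h1
    simp only [add_sub_cancel_left, ENNReal.ofReal_one, ENNReal.toReal_one, one_smul] at h1
    rw [hf_int] at h2
    linarith
  intro θ
  obtain ⟨C, hC⟩ := hα_loc (2 + K) (by linarith)
  refine ⟨max C 0 * K, fun x => ?_⟩
  have hfx := hf_pos (x - θ)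
  have hα : α (f (x - θ)) ≤ max C 0 := by
    refine le_trans (hC _ ⟨hfx, ?_⟩) (le_max_left _ _)
    have := hfb (x - θ); linarith
  have hαnn : 0 ≤ α (f (x - θ)) := hα_nonneg _ hfx
  rw [abs_neg, abs_mul, abs_of_nonneg hαnn]
  exact mul_le_mul hα (hf' _) (abs_nonneg _) (le_max_right _ _)
end

section
/- For the Tsallis score with γ ≥ 2 applied to a real location model p_θ(x) = f(x−θ) with f and f' bounded, the estimating function λ(x,θ) ∝ f(x−θ)^{γ−2} f'(x−θ) is bounded in x, so the Tsallis estimator is B-robust. -/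
open MeasureTheory Real

/-- Tsallis score with γ ≥ 2 on a location model with f and f' bounded: the
estimating function λ(x,θ) = γ(γ−1) f(x−θ)^{γ−2} f'(x−θ) is bounded in x,
hence the Tsallis estimator is B-robust. -/
theorem tsallis_location_B_robust
    (γ : ℝ) (hγ : 2 ≤ γ)
    (f : ℝ → ℝ)
    (hf_nonneg : ∀ x, 0 ≤ f x)
    (hf_diff : Differentiable ℝ f)
    (hf_int : ∫ x, f x = 1)
    (hf_bdd : ∃ C, ∀ x, f x ≤ C)
    (hf' : ∃ K, ∀ x, |deriv f x| ≤ K) :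
    ∀ θ : ℝ, ∃ B, ∀ x, |γ * (γ - 1) * f (x - θ) ^ (γ - 2) * deriv f (x - θ)| ≤ B := by
  obtain ⟨C, hC⟩ := hf_bdd
  obtain ⟨K, hK⟩ := hf'
  intro θ
  have hK0 : 0 ≤ K := le_trans (abs_nonneg _) (hK 0)
  have hγ0 : 0 ≤ γ := by linarith
  have hγ1 : 0 ≤ γ - 1 := by linarith
  have hγ2 : 0 ≤ γ - 2 := by linarith
  set M := max C 1 with hM
  have hM1 : (1:ℝ) ≤ M := le_max_right _ _
  have hM0 : (0:ℝ) ≤ M := by linarith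
  refine ⟨γ * (γ - 1) * M ^ (γ - 2) * K, fun x => ?_⟩
  have hfx : 0 ≤ f (x - θ) := hf_nonneg _
  have hrpow_nonneg : 0 ≤ f (x - θ) ^ (γ - 2) := Real.rpow_nonneg hfx _
  have h1 : f (x - θ) ^ (γ - 2) ≤ M ^ (γ - 2) :=
    Real.rpow_le_rpow hfx (le_trans (hC _) (le_max_left _ _)) hγ2
  have habs : |γ * (γ - 1) * f (x - θ) ^ (γ - 2) * deriv f (x - θ)|
      = γ * (γ - 1) * f (x - θ) ^ (γ - 2) * |deriv f (x - θ)| := by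
    rw [abs_mul, abs_of_nonneg (by positivity : (0:ℝ) ≤ γ * (γ - 1) * f (x - θ) ^ (γ - 2))]
  rw [habs]
  have hMp : 0 ≤ M ^ (γ - 2) := Real.rpow_nonneg hM0 _
  calc γ * (γ - 1) * f (x - θ) ^ (γ - 2) * |deriv f (x - θ)|
      ≤ γ * (γ - 1) * M ^ (γ - 2) * |deriv f (x - θ)| := by
        apply mul_le_mul_of_nonneg_right _ (abs_nonneg _)
        apply mul_le_mul_of_nonneg_left h1 (by positivity)
    _ ≤ γ * (γ - 1) * M ^ (γ - 2) * K :=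
        mul_le_mul_of_nonneg_left (hK _) (by positivity)
end
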